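/- arXiv:2206.10271 — 7 statements merged into one kernel-verified Lean document; each statement's English description precedes it below -/
import Mathlib

section
/- For every nonnegative convex function G : [0,∞) → [0,∞) with G(0) = 0, G differentiable with G'(0) ≥ 0 and G' concave (nondecreasing), and for all positive integers i, j, one has (i+j)(G(i+j) − G(i) − G(j)) ≤ 2(i·G(j) + j·G(i)). -/
/-!
Write `f = G'`. A concave `f` with `f 0 ≥ 0` satisfies `a f(x) ≤ f(a x)` for `a ∈ [0,1]`, hence is
subadditive on `[0,∞)`. Comparing derivatives in the second variable (mean value theorem) then
gives `G(x+y) - G(x) - G(y) ≤ y f(x)`, and comparing `G(t)` with `t² f(x) / (2x)` on `[0,x]` gives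
`x f(x) ≤ 2 G(x)`. Multiplying the first bound by `x`, its mirror image by `y`, and applying the
second to `x f(x)` and `y f(y)` yields the inequality.
-/

open Set

theorem ConcaveOn.smul_apply_le_apply_smul {E : Type*} [AddCommMonoid E] [Module ℝ E]
    {s : Set E} {f : E → ℝ} (hf : ConcaveOn ℝ s f) (h0s : 0 ∈ s) (h0 : 0 ≤ f 0)
    {x : E} (hx : x ∈ s) {a : ℝ} (ha₀ : 0 ≤ a) (ha₁ : a ≤ 1) : a • f x ≤ f (a • x) := by
  have h := hf.2 hx h0s ha₀ (sub_nonneg.2 ha₁) (add_sub_cancel a 1)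
  rw [smul_zero, add_zero] at h
  exact le_trans (le_add_of_nonneg_right (smul_nonneg (sub_nonneg.2 ha₁) h0)) h

theorem ConcaveOn.apply_add_le {f : ℝ → ℝ} (hf : ConcaveOn ℝ (Ici 0) f) (h0 : 0 ≤ f 0)
    {x y : ℝ} (hx : 0 ≤ x) (hy : 0 ≤ y) : f (x + y) ≤ f x + f y := by
  rcases (add_nonneg hx hy).eq_or_lt with hxy | hxy
  · obtain ⟨rfl, rfl⟩ : x = 0 ∧ y = 0 := ⟨by linarith, by linarith⟩
    simpa using h0
  have hmem : x + y ∈ Ici (0 : ℝ) := hxy.le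
  have key : ∀ t, 0 ≤ t → t ≤ x + y → t / (x + y) * f (x + y) ≤ f t := fun t ht₀ ht₁ => by
    simpa [div_mul_cancel₀ t hxy.ne'] using
      hf.smul_apply_le_apply_smul self_mem_Ici h0 hmem (div_nonneg ht₀ hxy.le)
        ((div_le_one hxy).2 ht₁)
  calc f (x + y) = x / (x + y) * f (x + y) + y / (x + y) * f (x + y) := by
        field_simp
    _ ≤ f x + f y := add_le_add (key x hx (by linarith)) (key y hy (by linarith))

section Antiderivative

variable {G f : ℝ → ℝ} (hG : ContinuousOn G (Ici 0)) (hGf : ∀ x, 0 < x → HasDerivAt G (f x) x)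
  (hG0 : G 0 = 0)
include hG hGf hG0

theorem sub_sub_le_mul_of_subadditive
    (hsub : ∀ x y, 0 < x → 0 < y → f (x + y) ≤ f x + f y) {x y : ℝ} (hx : 0 < x) (hy : 0 ≤ y) :
    G (x + y) - G x - G y ≤ y * f x := by
  set φ : ℝ → ℝ := fun t => G (x + t) - G x - G t - t * f x
  have hφ : AntitoneOn φ (Ici 0) := by
    refine antitoneOn_of_hasDerivWithinAt_nonpos (convex_Ici 0)
      (f' := fun t => f (x + t) - f t - f x) ?_ (fun t ht => ?_) (fun t ht => ?_)
    · have hshift : ContinuousOn (fun t => G (x + t)) (Ici 0) :=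
        hG.comp (continuousOn_const.add continuousOn_id) fun t (ht : 0 ≤ t) =>
          show (0 : ℝ) ≤ x + t by linarith
      exact ((hshift.sub continuousOn_const).sub hG).sub (continuousOn_id.mul continuousOn_const)
    · rw [interior_Ici] at ht
      have hshift := (hGf (x + t) (by linarith [mem_Ioi.1 ht])).comp t
        ((hasDerivAt_id t).const_add x)
      have hφ' := ((hshift.sub_const (G x)).sub (hGf t ht)).sub ((hasDerivAt_id t).mul_const (f x))
      simp only [mul_one, one_mul] at hφ'
      exact hφ'.hasDerivWithinAt
    · rw [interior_Ici] at ht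
      linarith [hsub x t hx ht]
  simpa [φ, hG0] using hφ self_mem_Ici hy hy

theorem mul_le_two_mul_of_concaveOn (hf : ConcaveOn ℝ (Ici 0) f) (hf0 : 0 ≤ f 0) {x : ℝ}
    (hx : 0 < x) : x * f x ≤ 2 * G x := by
  set χ : ℝ → ℝ := fun t => G t - f x / (2 * x) * t ^ 2
  have hχ : MonotoneOn χ (Icc 0 x) := by
    refine monotoneOn_of_hasDerivWithinAt_nonneg (convex_Icc 0 x)
      (f' := fun t => f t - f x / (2 * x) * (2 * t)) ?_ (fun t ht => ?_) (fun t ht => ?_)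
    · exact (hG.mono Icc_subset_Ici_self).sub (continuousOn_const.mul (continuousOn_pow 2))
    · rw [interior_Icc] at ht
      have hχ' := (hGf t ht.1).sub ((hasDerivAt_pow 2 t).const_mul (f x / (2 * x)))
      simp only [Nat.cast_ofNat, Nat.add_one_sub_one, pow_one] at hχ'
      exact hχ'.hasDerivWithinAt
    · rw [interior_Icc] at ht
      have h := hf.smul_apply_le_apply_smul self_mem_Ici hf0 (mem_Ici.2 hx.le)
        (div_nonneg ht.1.le hx.le) ((div_le_one hx).2 ht.2.le)
      rw [smul_eq_mul, smul_eq_mul, div_mul_cancel₀ t hx.ne'] at h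
      have : f x / (2 * x) * (2 * t) = t / x * f x := by
        field_simp
      linarith
  have h := hχ (left_mem_Icc.2 hx.le) (right_mem_Icc.2 hx.le) hx.le
  have : f x / (2 * x) * x ^ 2 = x * f x / 2 := by
    field_simp
  simp only [χ, hG0, this] at h
  linarith

end Antiderivative

theorem stmt_0_general (G : ℝ → ℝ)
    (hG0 : G 0 = 0)
    (hG_diff : DifferentiableOn ℝ G (Ici (0:ℝ)))
    (hG'0 : 0 ≤ deriv G 0)
    (hG'_concave : ConcaveOn ℝ (Ici (0:ℝ)) (deriv G)) :
    ∀ i j : ℕ, 1 ≤ i → 1 ≤ j →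
      ((i : ℝ) + j) * (G ((i : ℝ) + j) - G i - G j) ≤
        2 * ((i : ℝ) * G j + (j : ℝ) * G i) := by
  intro i j hi hj
  have hcont := hG_diff.continuousOn
  have hderiv : ∀ x : ℝ, 0 < x → HasDerivAt G (deriv G x) x := fun x hx =>
    ((hG_diff x hx.le).differentiableAt (Ici_mem_nhds hx)).hasDerivAt
  have hsub : ∀ x y : ℝ, 0 < x → 0 < y → deriv G (x + y) ≤ deriv G x + deriv G y :=
    fun x y hx hy => hG'_concave.apply_add_le hG'0 hx.le hy.le
  have hi : (0 : ℝ) < i := by exact_mod_cast hi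
  have hj : (0 : ℝ) < j := by exact_mod_cast hj
  have hij := sub_sub_le_mul_of_subadditive hcont hderiv hG0 hsub hi hj.le
  have hji := sub_sub_le_mul_of_subadditive hcont hderiv hG0 hsub hj hi.le
  rw [add_comm (j : ℝ), sub_right_comm] at hji
  have hGi := mul_le_two_mul_of_concaveOn hcont hderiv hG0 hG'_concave hG'0 hi
  have hGj := mul_le_two_mul_of_concaveOn hcont hderiv hG0 hG'_concave hG'0 hj
  calc ((i : ℝ) + j) * (G (i + j) - G i - G j)
      ≤ i * (j * deriv G i) + j * (i * deriv G j) := by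
        rw [add_mul]
        exact add_le_add (mul_le_mul_of_nonneg_left hij hi.le)
          (mul_le_mul_of_nonneg_left hji hj.le)
    _ = j * (i * deriv G i) + i * (j * deriv G j) := by ring
    _ ≤ 2 * (i * G j + j * G i) := by nlinarith

theorem stmt_0 (G : ℝ → ℝ)
    (hG_nonneg : ∀ x ∈ Ici (0:ℝ), 0 ≤ G x)
    (hG_convex : ConvexOn ℝ (Ici (0:ℝ)) G)
    (hG0 : G 0 = 0)
    (hG_diff : DifferentiableOn ℝ G (Ici (0:ℝ)))
    (hG'0 : 0 ≤ deriv G 0)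
    (hG'_concave : ConcaveOn ℝ (Ici (0:ℝ)) (deriv G)) :
    ∀ i j : ℕ, 1 ≤ i → 1 ≤ j →
      ((i : ℝ) + j) * (G ((i : ℝ) + j) - G i - G j) ≤
        2 * ((i : ℝ) * G j + (j : ℝ) * G i) :=
  stmt_0_general G hG0 hG_diff hG'0 hG'_concave
end

section
/- Let (ξᵢ)_{1≤i≤k} be a nonnegative solution of the truncated Safronov–Dubovskiǐ system on [0,∞) with kernel satisfying 0 ≤ γ_{i,j} = γ_{j,i} ≤ A(i+j) and initial first moment Σ_{j=1}^{k} j ξ_j(0) ≤ M. Then for each fixed i ≥ 1 there is a constant ϖᵢ depending only on A, M and i (not on k) such that |dξᵢ/dt (t)| ≤ ϖᵢ for all t ≥ 0. -/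
/-!
Weighting the equation for `ξ_p` by `p` and summing, the gain and loss terms telescope and, by
the symmetry of `γ`, the collision term is the total flux, so `d/dt ∑ j ξ_j = -(k + 1) · flux_k ≤ 0`. Hence the first
moment stays below `M`, which bounds every `ξ_j` by `M` and every kernel-weighted partial sum by
`O(i M)`; each of the three terms in `dξ_i/dt` is then `O(i M²)`, independently of `k`.
-/

open Finset

namespace SafronovDubovskii

variable (k : ℕ) (γ : ℕ → ℕ → ℝ) (a : ℕ → ℝ)

/-- The transfer rate from size class `q` to size class `q + 1`: in `rhs`, the equation for
`ξ_p`, it is the gain term for `p = q + 1` and a loss term for `p = q`. -/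
def flux (q : ℕ) : ℝ := a q * ∑ j ∈ Icc 1 q, (j : ℝ) * γ q j * a j

def loss (p : ℕ) : ℝ := ∑ j ∈ Icc p k, γ p j * a p * a j

def rhs (p : ℕ) : ℝ := flux γ a (p - 1) - flux γ a p - loss k γ a p

def moment : ℝ := ∑ j ∈ Icc 1 k, (j : ℝ) * a j

theorem sum_Icc_mul_sub_pred (b : ℕ → ℝ) (hb : b 0 = 0) (n : ℕ) :
    ∑ p ∈ Icc 1 n, (p : ℝ) * (b (p - 1) - b p) = ∑ q ∈ Icc 1 n, b q - (n + 1) * b n := by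
  induction n with
  | zero => simp [hb]
  | succ n ih =>
    rw [sum_Icc_succ_top (by omega), sum_Icc_succ_top (by omega), ih, Nat.add_sub_cancel]
    push_cast
    ring

theorem sum_mul_loss_eq_sum_flux (hγs : ∀ p q, γ p q = γ q p) :
    ∑ p ∈ Icc 1 k, (p : ℝ) * loss k γ a p = ∑ q ∈ Icc 1 k, flux γ a q := by
  calc ∑ p ∈ Icc 1 k, (p : ℝ) * loss k γ a p
      = ∑ p ∈ Ico 1 (k + 1), ∑ j ∈ Ico p (k + 1), (p : ℝ) * (γ p j * a p * a j) := by
        simp [loss, Ico_add_one_right_eq_Icc, mul_sum]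
    _ = ∑ j ∈ Ico 1 (k + 1), ∑ p ∈ Ico 1 (j + 1), (p : ℝ) * (γ p j * a p * a j) :=
        sum_Ico_Ico_comm 1 (k + 1) _
    _ = ∑ q ∈ Icc 1 k, flux γ a q := by
        simp only [flux, Ico_add_one_right_eq_Icc, mul_sum]
        refine sum_congr rfl fun q _ => sum_congr rfl fun j _ => ?_
        rw [hγs]
        ring

theorem sum_mul_rhs_eq (hγs : ∀ p q, γ p q = γ q p) :
    ∑ p ∈ Icc 1 k, (p : ℝ) * rhs k γ a p = -((k + 1) * flux γ a k) := by
  have hflux : flux γ a 0 = 0 := by simp [flux]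
  have hsplit : ∀ p : ℕ, (p : ℝ) * rhs k γ a p
      = p * (flux γ a (p - 1) - flux γ a p) - p * loss k γ a p := fun p => mul_sub _ _ _
  rw [sum_congr rfl fun p _ => hsplit p, sum_sub_distrib, sum_Icc_mul_sub_pred _ hflux,
    sum_mul_loss_eq_sum_flux k γ a hγs]
  ring

variable {k γ a}

section Nonneg

variable (hγ0 : ∀ p q, 0 ≤ γ p q) (ha : ∀ j ∈ Icc 1 k, 0 ≤ a j)
include hγ0 ha

theorem flux_nonneg {q : ℕ} (hq : q ≤ k) : 0 ≤ flux γ a q := by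
  rcases Nat.eq_zero_or_pos q with rfl | hq1
  · simp [flux]
  refine mul_nonneg (ha q (mem_Icc.2 ⟨hq1, hq⟩)) (sum_nonneg fun j hj => ?_)
  have hj := mem_Icc.1 hj
  exact mul_nonneg (mul_nonneg j.cast_nonneg (hγ0 q j))
    (ha j (mem_Icc.2 ⟨hj.1, hj.2.trans hq⟩))

theorem loss_nonneg {p : ℕ} (hp : p ∈ Icc 1 k) : 0 ≤ loss k γ a p := by
  refine sum_nonneg fun j hj => ?_
  have hp := mem_Icc.1 hp
  have hj := mem_Icc.1 hj
  exact mul_nonneg (mul_nonneg (hγ0 p j) (ha p (mem_Icc.2 hp)))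
    (ha j (mem_Icc.2 ⟨hp.1.trans hj.1, hj.2⟩))

theorem sum_mul_rhs_nonpos (hγs : ∀ p q, γ p q = γ q p) :
    ∑ p ∈ Icc 1 k, (p : ℝ) * rhs k γ a p ≤ 0 := by
  rw [sum_mul_rhs_eq k γ a hγs, neg_nonpos]
  exact mul_nonneg (by positivity) (flux_nonneg hγ0 ha le_rfl)

end Nonneg

section Bounds

variable (ha : ∀ j ∈ Icc 1 k, 0 ≤ a j)
include ha

theorem moment_nonneg : 0 ≤ moment k a :=
  sum_nonneg fun j hj => mul_nonneg j.cast_nonneg (ha j hj)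

theorem sum_mul_le_moment {s : Finset ℕ} (hs : s ⊆ Icc 1 k) :
    ∑ j ∈ s, (j : ℝ) * a j ≤ moment k a :=
  sum_le_sum_of_subset_of_nonneg hs fun j hj _ => mul_nonneg j.cast_nonneg (ha j hj)

theorem le_moment {q : ℕ} (hq : q ∈ Icc 1 k) : a q ≤ moment k a := by
  have hq1 : (1 : ℝ) ≤ q := by exact_mod_cast (mem_Icc.1 hq).1
  calc a q ≤ q * a q := le_mul_of_one_le_left (ha q hq) hq1
    _ ≤ moment k a := by simpa using sum_mul_le_moment ha (singleton_subset_iff.2 hq)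

variable {A : ℝ} (hA : 0 ≤ A)
  (hγA : ∀ p q : ℕ, 1 ≤ p → 1 ≤ q → γ p q ≤ A * ((p : ℝ) + q))
include hA hγA

theorem flux_le {q : ℕ} (hq : q ≤ k) :
    flux γ a q ≤ 2 * A * q * moment k a ^ 2 := by
  rcases Nat.eq_zero_or_pos q with rfl | hq1
  · simp [flux]
  have hqk : q ∈ Icc 1 k := mem_Icc.2 ⟨hq1, hq⟩
  have hsum : ∑ j ∈ Icc 1 q, (j : ℝ) * γ q j * a j ≤ 2 * A * q * moment k a :=
    calc ∑ j ∈ Icc 1 q, (j : ℝ) * γ q j * a j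
        ≤ ∑ j ∈ Icc 1 q, 2 * A * q * ((j : ℝ) * a j) := by
          refine sum_le_sum fun j hj => ?_
          have hj := mem_Icc.1 hj
          have hjq : (j : ℝ) ≤ q := by exact_mod_cast hj.2
          have haj := ha j (mem_Icc.2 ⟨hj.1, hj.2.trans hq⟩)
          have : γ q j ≤ 2 * A * q := by nlinarith [hγA q j hq1 hj.1]
          calc (j : ℝ) * γ q j * a j = γ q j * ((j : ℝ) * a j) := by ring
            _ ≤ 2 * A * q * ((j : ℝ) * a j) := by gcongr
      _ ≤ 2 * A * q * moment k a := by
          rw [← mul_sum]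
          gcongr
          exact sum_mul_le_moment ha (Icc_subset_Icc_right hq)
  calc flux γ a q ≤ a q * (2 * A * q * moment k a) :=
        mul_le_mul_of_nonneg_left hsum (ha q hqk)
    _ ≤ moment k a * (2 * A * q * moment k a) := by
        have := moment_nonneg ha
        gcongr
        exact le_moment ha hqk
    _ = 2 * A * q * moment k a ^ 2 := by ring

theorem loss_le {i : ℕ} (hi : i ∈ Icc 1 k) :
    loss k γ a i ≤ A * (i + 1) * moment k a ^ 2 := by
  have hi' := mem_Icc.1 hi
  have hm := moment_nonneg ha
  calc loss k γ a i ≤ ∑ j ∈ Icc i k, A * (i + 1) * a i * ((j : ℝ) * a j) := by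
        refine sum_le_sum fun j hj => ?_
        have hj := mem_Icc.1 hj
        have hj1 : 1 ≤ j := hi'.1.trans hj.1
        have haj := ha j (mem_Icc.2 ⟨hj1, hj.2⟩)
        have hai := ha i hi
        have hj1' : (1 : ℝ) ≤ j := by exact_mod_cast hj1
        have hAij := mul_nonneg (mul_nonneg hA i.cast_nonneg) (sub_nonneg.2 hj1')
        have : γ i j ≤ A * (i + 1) * j := by nlinarith [hγA i j hi'.1 hj1]
        calc γ i j * a i * a j = γ i j * (a i * a j) := by ring
          _ ≤ A * (i + 1) * j * (a i * a j) := by gcongr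
          _ = A * (i + 1) * a i * ((j : ℝ) * a j) := by ring
    _ = A * (i + 1) * a i * ∑ j ∈ Icc i k, (j : ℝ) * a j := by rw [mul_sum]
    _ ≤ A * (i + 1) * moment k a * moment k a :=
        mul_le_mul (mul_le_mul_of_nonneg_left (le_moment ha hi) (by positivity))
          (sum_mul_le_moment ha (Icc_subset_Icc_left hi'.1))
          (sum_nonneg fun j hj => mul_nonneg j.cast_nonneg (ha j (Icc_subset_Icc_left hi'.1 hj)))
          (by positivity)
    _ = A * (i + 1) * moment k a ^ 2 := by ring

theorem abs_rhs_le (hγ0 : ∀ p q, 0 ≤ γ p q) {i : ℕ} (hi : i ∈ Icc 1 k) :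
    |rhs k γ a i| ≤ A * (3 * i + 1) * moment k a ^ 2 := by
  have hik := (mem_Icc.1 hi).2
  have hAm : 0 ≤ A * moment k a ^ 2 := by positivity
  have hcast : ((i - 1 : ℕ) : ℝ) ≤ i := Nat.cast_le.2 (Nat.sub_le i 1)
  have hin : flux γ a (i - 1) ≤ A * (3 * i + 1) * moment k a ^ 2 := by
    nlinarith [flux_le ha hA hγA (Nat.sub_le i 1 |>.trans hik)]
  have hout : flux γ a i + loss k γ a i ≤ A * (3 * i + 1) * moment k a ^ 2 := by
    nlinarith [flux_le ha hA hγA hik, loss_le ha hA hγA hi]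
  rw [rhs, sub_sub]
  exact abs_sub_le_of_nonneg_of_le (flux_nonneg hγ0 ha (Nat.sub_le i 1 |>.trans hik)) hin
    (add_nonneg (flux_nonneg hγ0 ha hik) (loss_nonneg hγ0 ha hi)) hout

end Bounds

theorem moment_antitoneOn {ξ d : ℕ → ℝ → ℝ} (hγ0 : ∀ p q, 0 ≤ γ p q)
    (hγs : ∀ p q, γ p q = γ q p)
    (hξ : ∀ p ∈ Icc 1 k, ∀ t ∈ Set.Ici (0 : ℝ), 0 ≤ ξ p t)
    (hderiv : ∀ p ∈ Icc 1 k, ∀ t ∈ Set.Ici (0 : ℝ), HasDerivAt (ξ p) (d p t) t)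
    (heq : ∀ p ∈ Icc 1 k, ∀ t ∈ Set.Ici (0 : ℝ), d p t = rhs k γ (ξ · t) p) :
    AntitoneOn (fun t => moment k (ξ · t)) (Set.Ici 0) := by
  have hmoment : ∀ t ∈ Set.Ici (0 : ℝ), HasDerivAt (fun s => moment k (ξ · s))
      (∑ p ∈ Icc 1 k, (p : ℝ) * rhs k γ (ξ · t) p) t :=
    fun t ht => HasDerivAt.fun_sum fun p hp => by
      rw [← heq p hp t ht]
      exact (hderiv p hp t ht).const_mul _
  refine antitoneOn_of_hasDerivWithinAt_nonpos (convex_Ici 0)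
    (fun t ht => (hmoment t ht).continuousAt.continuousWithinAt)
    (fun t ht => (hmoment t (interior_subset ht)).hasDerivWithinAt) fun t ht => ?_
  exact sum_mul_rhs_nonpos hγ0 (fun j hj => hξ j hj t (interior_subset ht)) hγs

end SafronovDubovskii

open SafronovDubovskii in
theorem stmt_5_general (A M : ℝ) (hA : 0 < A) (i : ℕ) (hi : 1 ≤ i) :
    ∃ ϖ : ℝ, ∀ (k : ℕ), i ≤ k →
      ∀ (γ : ℕ → ℕ → ℝ) (ξ : ℕ → ℝ → ℝ) (d : ℕ → ℝ → ℝ),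
        (∀ p q, 0 ≤ γ p q) →
        (∀ p q, γ p q = γ q p) →
        (∀ p q : ℕ, 1 ≤ p → 1 ≤ q → γ p q ≤ A * ((p : ℝ) + q)) →
        (∀ p ∈ Icc 1 k, ∀ t ∈ Set.Ici (0:ℝ), 0 ≤ ξ p t) →
        (∀ p ∈ Icc 1 k, ∀ t ∈ Set.Ici (0:ℝ), HasDerivAt (ξ p) (d p t) t) →
        (∀ p ∈ Icc 1 k, ∀ t ∈ Set.Ici (0:ℝ),
          d p t = ξ (p - 1) t * ∑ j ∈ Icc 1 (p - 1), (j : ℝ) * γ (p - 1) j * ξ j t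
            - ξ p t * ∑ j ∈ Icc 1 p, (j : ℝ) * γ p j * ξ j t
            - ∑ j ∈ Icc p k, γ p j * ξ p t * ξ j t) →
        (∑ j ∈ Icc 1 k, (j : ℝ) * ξ j 0 ≤ M) →
        ∀ t ∈ Set.Ici (0:ℝ), |d i t| ≤ ϖ := by
  refine ⟨A * (3 * i + 1) * M ^ 2,
    fun k hik γ ξ d hγ0 hγs hγA hξ hderiv heq hM0 t ht => ?_⟩
  have hi' : i ∈ Icc 1 k := mem_Icc.2 ⟨hi, hik⟩
  have ha : ∀ j ∈ Icc 1 k, 0 ≤ ξ j t := fun j hj => hξ j hj t ht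
  have hmom : moment k (ξ · t) ≤ M :=
    (moment_antitoneOn hγ0 hγs hξ hderiv heq Set.self_mem_Ici ht ht).trans hM0
  have hmom0 := moment_nonneg ha
  calc |d i t| = |rhs k γ (ξ · t) i| := by rw [heq i hi' t ht]; rfl
    _ ≤ A * (3 * i + 1) * moment k (ξ · t) ^ 2 := abs_rhs_le ha hA.le hγA hγ0 hi'
    _ ≤ A * (3 * i + 1) * M ^ 2 := by gcongr

theorem stmt_5 (A M : ℝ) (hA : 0 < A) (hM : 0 ≤ M) (i : ℕ) (hi : 1 ≤ i) :
    ∃ ϖ : ℝ, ∀ (k : ℕ), i ≤ k →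
      ∀ (γ : ℕ → ℕ → ℝ) (ξ : ℕ → ℝ → ℝ) (d : ℕ → ℝ → ℝ),
        (∀ p q, 0 ≤ γ p q) →
        (∀ p q, γ p q = γ q p) →
        (∀ p q : ℕ, 1 ≤ p → 1 ≤ q → γ p q ≤ A * ((p : ℝ) + q)) →
        (∀ p ∈ Icc 1 k, ∀ t ∈ Set.Ici (0:ℝ), 0 ≤ ξ p t) →
        (∀ p ∈ Icc 1 k, ∀ t ∈ Set.Ici (0:ℝ), HasDerivAt (ξ p) (d p t) t) →
        (∀ p ∈ Icc 1 k, ∀ t ∈ Set.Ici (0:ℝ),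
          d p t = ξ (p - 1) t * ∑ j ∈ Icc 1 (p - 1), (j : ℝ) * γ (p - 1) j * ξ j t
            - ξ p t * ∑ j ∈ Icc 1 p, (j : ℝ) * γ p j * ξ j t
            - ∑ j ∈ Icc p k, γ p j * ξ p t * ξ j t) →
        (∑ j ∈ Icc 1 k, (j : ℝ) * ξ j 0 ≤ M) →
        ∀ t ∈ Set.Ici (0:ℝ), |d i t| ≤ ϖ :=
  stmt_5_general A M hA i hi
end

section
/- Let ν be a measure on ℕ with Σ_{i≥1} i ν({i}) < ∞. Then there exists a function G : [0,∞) → [0,∞), convex, C¹, with G(0)=0, G'(0) ≥ 0, G' concave, and lim_{ζ→∞} G(ζ)/ζ = +∞, such that Σ_{i≥1} G(i) ν({i}) < ∞. -/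
/-!
Put `a i = i ν{i}`. By dominated convergence `∑ i, min (i / n) 1 * a i → 0` as `n → ∞`, so
there are scales `N k ≥ 2 ^ k` with `∑ i, min (i / N k) 1 * a i ≤ 2⁻ᵏ`. The function
`g x = ∑ k, min (x / N k) 1` is a sum of concave ramps, hence concave, nondecreasing, `g 0 = 0`
and `g → ∞`, and by Tonelli `∑ i, g i * a i ≤ 2`. Its primitive `G x = ∫₀ˣ g` is convex
with `G' = g`, `G x / x ≥ g (x / 2) / 2 → ∞`, and `G i ≤ i * g i` bounds `∑ i, G i * ν{i}`
by `∑ i, g i * a i`.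
-/

open Set MeasureTheory Filter Topology
open scoped ENNReal

lemma concaveOn_tsum {ι E : Type*} [AddCommMonoid E] [Module ℝ E] {s : Set E}
    {f : ι → E → ℝ} (hs : Convex ℝ s) (hf : ∀ i, ConcaveOn ℝ s (f i))
    (hsum : ∀ x ∈ s, Summable fun i => f i x) : ConcaveOn ℝ s fun x => ∑' i, f i x := by
  refine ⟨hs, fun x hx y hy a b ha hb hab => ?_⟩
  have hx' := (hsum x hx).mul_left a
  have hy' := (hsum y hy).mul_left b
  simp only [smul_eq_mul]
  rw [← tsum_mul_left, ← tsum_mul_left, ← hx'.tsum_add hy']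
  exact (hx'.add hy').tsum_le_tsum (fun i => (hf i).2 hx hy ha hb hab)
    (hsum _ (hs hx hy ha hb hab))

noncomputable def rampSum (N : ℕ → ℝ) (x : ℝ) : ℝ := ∑' k, min (x / N k) 1

section RampSum

variable {N : ℕ → ℝ}

lemma summable_min_div_one (hN : ∀ k, 0 < N k) (hNsum : Summable fun k => (N k)⁻¹) (x : ℝ) :
    Summable fun k => min (x / N k) 1 := by
  refine (hNsum.mul_left |x|).of_norm_bounded fun k => ?_
  rw [Real.norm_eq_abs, ← div_eq_mul_inv]
  rcases le_total (x / N k) 1 with h | h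
  · rw [min_eq_left h, abs_div, abs_of_pos (hN k)]
  · rw [min_eq_right h, abs_one]
    exact h.trans (div_le_div_of_nonneg_right (le_abs_self x) (hN k).le)

lemma rampSum_zero : rampSum N 0 = 0 := by simp [rampSum]

lemma rampSum_nonneg (hN : ∀ k, 0 < N k) {x : ℝ} (hx : 0 ≤ x) : 0 ≤ rampSum N x :=
  tsum_nonneg fun k => le_min (div_nonneg hx (hN k).le) zero_le_one

lemma monotone_rampSum (hN : ∀ k, 0 < N k) (hNsum : Summable fun k => (N k)⁻¹) :
    Monotone (rampSum N) := fun x y hxy =>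
  (summable_min_div_one hN hNsum x).tsum_le_tsum
    (fun k => min_le_min_right 1 (div_le_div_of_nonneg_right hxy (hN k).le))
    (summable_min_div_one hN hNsum y)

lemma concaveOn_rampSum (hN : ∀ k, 0 < N k) (hNsum : Summable fun k => (N k)⁻¹) :
    ConcaveOn ℝ univ (rampSum N) :=
  concaveOn_tsum convex_univ
    (fun k => ((LinearMap.mulRight ℝ (N k)⁻¹).concaveOn convex_univ).inf
      (concaveOn_const 1 convex_univ))
    (fun x _ => summable_min_div_one hN hNsum x)

lemma continuous_rampSum (hN : ∀ k, 0 < N k) (hNsum : Summable fun k => (N k)⁻¹) :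
    Continuous (rampSum N) :=
  continuousOn_univ.mp ((concaveOn_rampSum hN hNsum).continuousOn isOpen_univ)

lemma tendsto_rampSum_atTop (hN : ∀ k, 0 < N k) (hNsum : Summable fun k => (N k)⁻¹) :
    Tendsto (rampSum N) atTop atTop := by
  refine tendsto_atTop.2 fun C => ?_
  obtain ⟨K, hK⟩ := exists_nat_ge C
  have hlarge : ∀ᶠ x in atTop, ∀ k ∈ Finset.range K, N k ≤ x :=
    (Filter.eventually_all_finset _).2 fun k _ => eventually_ge_atTop (N k)
  filter_upwards [hlarge, eventually_ge_atTop 0] with x hx hx0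
  calc C ≤ K := hK
    _ = ∑ k ∈ Finset.range K, min (x / N k) 1 := by
        rw [Finset.sum_congr rfl fun k hk => min_eq_right ((one_le_div (hN k)).2 (hx k hk))]
        simp
    _ ≤ rampSum N x := (summable_min_div_one hN hNsum x).sum_le_tsum _
        fun k _ => le_min (div_nonneg hx0 (hN k).le) zero_le_one

end RampSum

section Primitive

variable {g : ℝ → ℝ}

lemma convexOn_integral_of_monotone (hg : Continuous g) (hmono : Monotone g) :
    ConvexOn ℝ univ fun x => ∫ t in (0:ℝ)..x, g t :=
  Monotone.convexOn_univ_of_deriv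
    (fun x => (hg.integral_hasStrictDerivAt 0 x).hasDerivAt.differentiableAt)
    (by rwa [funext (hg.deriv_integral _ 0)])

lemma integral_le_mul_of_monotone (hmono : Monotone g) {x : ℝ} (hx : 0 ≤ x) :
    ∫ t in (0:ℝ)..x, g t ≤ x * g x := by
  simpa using intervalIntegral.integral_mono_on hx hmono.intervalIntegrable
    (intervalIntegrable_const (μ := volume)) fun t ht => hmono ht.2

lemma mul_le_integral_of_monotone (hmono : Monotone g) (hg0 : 0 ≤ g 0) {x y : ℝ} (hy : 0 ≤ y)
    (hyx : y ≤ x) : (x - y) * g y ≤ ∫ t in (0:ℝ)..x, g t := by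
  rw [← intervalIntegral.integral_add_adjacent_intervals hmono.intervalIntegrable
    hmono.intervalIntegrable (b := y)]
  have hleft : 0 ≤ ∫ t in (0:ℝ)..y, g t :=
    intervalIntegral.integral_nonneg hy fun t ht => hg0.trans (hmono ht.1)
  have hright : (x - y) * g y ≤ ∫ t in y..x, g t := by
    simpa using intervalIntegral.integral_mono_on hyx (intervalIntegrable_const (μ := volume))
      hmono.intervalIntegrable fun t ht => hmono ht.1
  linarith

lemma tendsto_integral_div_atTop (hmono : Monotone g) (hg0 : 0 ≤ g 0)
    (htop : Tendsto g atTop atTop) :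
    Tendsto (fun x => (∫ t in (0:ℝ)..x, g t) / x) atTop atTop := by
  have hhalf : Tendsto (fun x => g (x / 2) / 2) atTop atTop :=
    (htop.comp (tendsto_id.atTop_div_const two_pos)).atTop_div_const two_pos
  refine tendsto_atTop_mono' _ ?_ hhalf
  filter_upwards [eventually_gt_atTop 0] with x hx
  rw [le_div_iff₀ hx]
  calc g (x / 2) / 2 * x = (x - x / 2) * g (x / 2) := by ring
    _ ≤ _ := mul_le_integral_of_monotone hmono hg0 (by positivity) (by linarith)

end Primitive

lemma tendsto_tsum_ofReal_min_div_mul {a : ℕ → ℝ≥0∞} (ha : ∑' i, a i ≠ ∞) :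
    Tendsto (fun n : ℕ => ∑' i : ℕ, ENNReal.ofReal (min (i / n) 1) * a i) atTop (𝓝 0) := by
  have hlim (i : ℕ) :
      Tendsto (fun n : ℕ => ENNReal.ofReal (min (i / n) 1) * a i) atTop (𝓝 0) := by
    have h := (tendsto_const_div_atTop_nhds_zero_nat (i : ℝ)).min (tendsto_const_nhds (x := 1))
    simpa using ENNReal.Tendsto.mul_const (ENNReal.tendsto_ofReal h)
      (Or.inr (ENNReal.ne_top_of_tsum_ne_top ha i))
  have hbound (n i : ℕ) : ENNReal.ofReal (min (i / n) 1) * a i ≤ a i :=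
    mul_le_of_le_one_left' (ENNReal.ofReal_le_one.2 (min_le_right _ _))
  simpa only [lintegral_count, Pi.zero_apply, tsum_zero] using
    tendsto_lintegral_of_dominated_convergence (μ := Measure.count) (f := 0) a
      (fun _ => .of_discrete) (fun n => .of_forall (hbound n)) (by rwa [lintegral_count])
      (.of_forall hlim)

lemma exists_scales_tsum_le {a : ℕ → ℝ≥0∞} (ha : ∑' i, a i ≠ ∞) :
    ∃ N : ℕ → ℝ, (∀ k, (2 : ℝ) ^ k ≤ N k) ∧
      ∀ k, ∑' i : ℕ, ENNReal.ofReal (min (i / N k) 1) * a i ≤ 2⁻¹ ^ k := by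
  have hscale (k : ℕ) : ∃ n : ℕ, 2 ^ k ≤ n ∧
      ∑' i : ℕ, ENNReal.ofReal (min (i / n) 1) * a i < 2⁻¹ ^ k :=
    ((eventually_ge_atTop _).and ((tendsto_tsum_ofReal_min_div_mul ha).eventually_lt_const
      (ENNReal.pow_pos (ENNReal.inv_pos.2 ENNReal.ofNat_ne_top) k))).exists
  choose n hn2 hnsmall using hscale
  exact ⟨fun k => n k, fun k => by dsimp only; exact_mod_cast hn2 k, fun k => (hnsmall k).le⟩

lemma exists_rampSum_tsum_mul_ne_top {a : ℕ → ℝ≥0∞} (ha : ∑' i, a i ≠ ∞) :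
    ∃ N : ℕ → ℝ, (∀ k, 0 < N k) ∧ Summable (fun k => (N k)⁻¹) ∧
      ∑' i : ℕ, ENNReal.ofReal (rampSum N i) * a i ≠ ∞ := by
  obtain ⟨N, hN2, hNsmall⟩ := exists_scales_tsum_le ha
  have hN (k : ℕ) : 0 < N k := (pow_pos two_pos k).trans_le (hN2 k)
  have hNsum : Summable fun k => (N k)⁻¹ :=
    summable_geometric_two.of_nonneg_of_le (fun k => (inv_pos.2 (hN k)).le) fun k => by
      rw [one_div, inv_pow]
      exact inv_anti₀ (pow_pos two_pos k) (hN2 k)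
  refine ⟨N, hN, hNsum, ne_top_of_le_ne_top (b := 2) ENNReal.ofNat_ne_top ?_⟩
  calc ∑' i : ℕ, ENNReal.ofReal (rampSum N i) * a i
      = ∑' i : ℕ, ∑' k, ENNReal.ofReal (min (i / N k) 1) * a i := by
        refine tsum_congr fun i => ?_
        rw [rampSum, ENNReal.ofReal_tsum_of_nonneg
          (fun k => le_min (div_nonneg i.cast_nonneg (hN k).le) zero_le_one)
          (summable_min_div_one hN hNsum _), ENNReal.tsum_mul_right]
    _ = ∑' k, ∑' i : ℕ, ENNReal.ofReal (min (i / N k) 1) * a i := ENNReal.tsum_comm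
    _ ≤ ∑' k : ℕ, (2⁻¹ : ℝ≥0∞) ^ k := ENNReal.tsum_le_tsum hNsmall
    _ = 2 := by rw [ENNReal.tsum_geometric, ENNReal.one_sub_inv_two, inv_inv]

theorem stmt_6 (ν : Measure ℕ)
    (hν : ∑' i : ℕ, (i : ENNReal) * ν {i} ≠ ⊤) :
    ∃ G : ℝ → ℝ,
      (∀ x ∈ Ici (0:ℝ), 0 ≤ G x) ∧
      ConvexOn ℝ (Ici (0:ℝ)) G ∧
      DifferentiableOn ℝ G (Ici (0:ℝ)) ∧
      G 0 = 0 ∧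
      0 ≤ deriv G 0 ∧
      ConcaveOn ℝ (Ici (0:ℝ)) (deriv G) ∧
      Tendsto (fun ζ : ℝ => G ζ / ζ) atTop atTop ∧
      ∑' i : ℕ, ENNReal.ofReal (G i) * ν {i} ≠ ⊤ := by
  obtain ⟨N, hN, hNsum, hfin⟩ := exists_rampSum_tsum_mul_ne_top hν
  have hcont := continuous_rampSum hN hNsum
  have hmono := monotone_rampSum hN hNsum
  have hderiv : deriv (fun x => ∫ t in (0:ℝ)..x, rampSum N t) = rampSum N :=
    funext (hcont.deriv_integral _ 0)
  refine ⟨fun x => ∫ t in (0:ℝ)..x, rampSum N t,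
    fun x hx => intervalIntegral.integral_nonneg hx fun t ht => rampSum_nonneg hN ht.1,
    (convexOn_integral_of_monotone hcont hmono).subset (subset_univ _) (convex_Ici 0),
    fun x _ =>
      (hcont.integral_hasStrictDerivAt 0 x).hasDerivAt.differentiableAt.differentiableWithinAt,
    intervalIntegral.integral_same, by rw [hderiv, rampSum_zero],
    by rw [hderiv]; exact (concaveOn_rampSum hN hNsum).subset (subset_univ _) (convex_Ici 0),
    tendsto_integral_div_atTop hmono rampSum_zero.ge (tendsto_rampSum_atTop hN hNsum),
    ne_top_of_le_ne_top hfin (ENNReal.tsum_le_tsum fun i => ?_)⟩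
  calc ENNReal.ofReal (∫ t in (0:ℝ)..i, rampSum N t) * ν {i}
      ≤ ENNReal.ofReal (i * rampSum N i) * ν {i} := by
        gcongr; exact integral_le_mul_of_monotone hmono i.cast_nonneg
    _ = ENNReal.ofReal (rampSum N i) * (i * ν {i}) := by
        rw [ENNReal.ofReal_mul i.cast_nonneg, ENNReal.ofReal_natCast, mul_comm (i : ℝ≥0∞),
          mul_assoc]
end

section
/- Let ξ = (ξᵢ)_{i≥1} be a solution of the discrete Safronov–Dubovskiǐ coagulation equation on [0,T] with ξᵢ(t) ≥ 0, Σ_{i} i ξᵢ(t) < ∞, and suppose (Φᵢ)_{i≥1} has at most polynomial growth. Then for each q > 1 and t ∈ [0,T], d/dt Σ_{i=1}^{q} Φᵢ ξᵢ(t) = Σ_{i=1}^{q−1} Σ_{j=1}^{i} j Φ_{i+1} γ_{i,j} ξᵢ ξ_j − Σ_{i=1}^{q} Σ_{j=1}^{i} (j Φᵢ + Φ_j) γ_{i,j} ξᵢ ξ_j − Σ_{i=q+1}^{∞} Σ_{j=1}^{q} Φ_j γ_{i,j} ξᵢ ξ_j. -/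
/-! Multiply the `i`-th equation by `Φ i` and sum over `1 ≤ i ≤ q`. The gain term, shifted by
`i ↦ i + 1`, is the first double sum (its `i = 1` term vanishes). The last loss term
`ξ i ∑_{j ≥ i} γ i j ξ j` splits at `j = q`: the part `j ≤ q` becomes, after exchanging `i` and `j`
by the symmetry of `γ`, the triangle `∑_{j ≤ i ≤ q} Φ j γ i j ξ i ξ j`, which joins the other loss
term; the part `j > q`, summed over `i ≤ q`, is the tail series. -/

open Finset

section Reindexing

variable {M : Type*} [AddCommMonoid M]

theorem Finset.sum_Icc_one_eq_sum_Icc_succ_of_eq_zero (F : ℕ → M) (hF : F 1 = 0) :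
    ∀ q : ℕ, ∑ i ∈ Icc 1 q, F i = ∑ i ∈ Icc 1 (q - 1), F (i + 1)
  | 0 => rfl
  | 1 => by simp [hF]
  | q + 2 => by
    rw [sum_Icc_succ_top (by omega), sum_Icc_one_eq_sum_Icc_succ_of_eq_zero F hF (q + 1),
      Nat.add_sub_cancel, show q + 2 - 1 = q + 1 by omega, sum_Icc_succ_top (by omega)]

theorem Finset.sum_Icc_sum_Icc_comm (a q : ℕ) (f : ℕ → ℕ → M) :
    ∑ i ∈ Icc a q, ∑ j ∈ Icc a i, f i j = ∑ j ∈ Icc a q, ∑ i ∈ Icc j q, f i j :=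
  sum_comm' fun i j => by simp only [mem_Icc]; omega

end Reindexing

section Tails

variable {G : Type*} [AddCommGroup G] [TopologicalSpace G] [IsTopologicalAddGroup G]

theorem Summable.ite_le_of_le {a : ℕ → G} {i k : ℕ}
    (h : Summable fun j => if i ≤ j then a j else 0) (hik : i ≤ k) :
    Summable fun j => if k ≤ j then a j else 0 := by
  have hfin : Summable fun j => if j ∈ Ico i k then a j else 0 :=
    summable_of_ne_finset_zero fun j hj => if_neg hj
  refine (h.sub hfin).congr fun j => ?_
  simp only [mem_Ico]
  split_ifs <;> first | omega | abel

theorem tsum_ite_le_eq_sum_Icc_add [T2Space G] {a : ℕ → G} {i : ℕ} (q : ℕ)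
    (h : Summable fun j => if i ≤ j then a j else 0) (hiq : i ≤ q + 1) :
    ∑' j, (if i ≤ j then a j else 0)
      = ∑ j ∈ Icc i q, a j + ∑' j, if q + 1 ≤ j then a j else 0 := by
  have hfin : Summable fun j => if j ∈ Icc i q then a j else 0 :=
    summable_of_ne_finset_zero fun j hj => if_neg hj
  have hsplit : ∀ j, (if i ≤ j then a j else 0)
      = (if j ∈ Icc i q then a j else 0) + if q + 1 ≤ j then a j else 0 := by
    intro j
    simp only [mem_Icc]
    split_ifs <;> first | omega | abel
  rw [tsum_congr hsplit, hfin.tsum_add (h.ite_le_of_le hiq),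
    tsum_eq_sum fun j hj => if_neg hj, sum_congr rfl fun j hj => if_pos hj]

end Tails

section Coagulation

variable {γ : ℕ → ℕ → ℝ} (x Φ : ℕ → ℝ) (q : ℕ)

theorem sum_gain_eq :
    ∑ i ∈ Icc 1 q, Φ i * (x (i - 1) * ∑ j ∈ Icc 1 (i - 1), (j : ℝ) * γ (i - 1) j * x j)
      = ∑ i ∈ Icc 1 (q - 1), ∑ j ∈ Icc 1 i, (j : ℝ) * Φ (i + 1) * γ i j * x i * x j := by
  rw [sum_Icc_one_eq_sum_Icc_succ_of_eq_zero _ (by simp)]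
  refine sum_congr rfl fun i _ => ?_
  rw [Nat.add_sub_cancel, mul_sum, mul_sum]
  exact sum_congr rfl fun j _ => by ring

theorem sum_mul_tsum_loss_eq (hγ : ∀ i j, γ i j = γ j i)
    (hsum : ∀ i ∈ Icc 1 q, Summable fun j => if i ≤ j then γ i j * x j else 0) :
    ∑ i ∈ Icc 1 q, Φ i * (x i * ∑' j, if i ≤ j then γ i j * x j else 0)
      = (∑ i ∈ Icc 1 q, ∑ j ∈ Icc 1 i, Φ j * γ i j * x i * x j)
        + ∑' i, if q + 1 ≤ i then ∑ j ∈ Icc 1 q, Φ j * γ i j * x i * x j else 0 := by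
  have htail : ∀ i ∈ Icc 1 q, Summable fun j => if q + 1 ≤ j then γ i j * x j else 0 :=
    fun i hi => (hsum i hi).ite_le_of_le (by simp only [mem_Icc] at hi; omega)
  have hsplit : ∀ i ∈ Icc 1 q, Φ i * (x i * ∑' j, if i ≤ j then γ i j * x j else 0)
      = Φ i * x i * ∑ j ∈ Icc i q, γ i j * x j
        + ∑' j, if q + 1 ≤ j then Φ i * x i * (γ i j * x j) else 0 := by
    intro i hi
    rw [tsum_ite_le_eq_sum_Icc_add q (hsum i hi) (by simp only [mem_Icc] at hi; omega)]
    simp only [← mul_ite_zero, tsum_mul_left]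
    ring
  rw [sum_congr rfl hsplit, sum_add_distrib, sum_Icc_sum_Icc_comm,
    ← Summable.tsum_finsetSum fun i hi => ((htail i hi).mul_left (Φ i * x i)).congr
      fun j => mul_ite_zero _ _ _]
  congr 1
  · refine sum_congr rfl fun i _ => ?_
    rw [mul_sum]
    exact sum_congr rfl fun j _ => by rw [hγ i j]; ring
  · refine tsum_congr fun i => ?_
    split_ifs
    · exact sum_congr rfl fun j _ => by rw [hγ j i]; ring
    · simp

theorem sum_loss_eq (hγ : ∀ i j, γ i j = γ j i)
    (hsum : ∀ i ∈ Icc 1 q, Summable fun j => if i ≤ j then γ i j * x j else 0) :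
    (∑ i ∈ Icc 1 q, Φ i * (x i * ∑ j ∈ Icc 1 i, (j : ℝ) * γ i j * x j))
        + ∑ i ∈ Icc 1 q, Φ i * (x i * ∑' j, if i ≤ j then γ i j * x j else 0)
      = (∑ i ∈ Icc 1 q, ∑ j ∈ Icc 1 i, ((j : ℝ) * Φ i + Φ j) * γ i j * x i * x j)
        + ∑' i, if q + 1 ≤ i then ∑ j ∈ Icc 1 q, Φ j * γ i j * x i * x j else 0 := by
  rw [sum_mul_tsum_loss_eq x Φ q hγ hsum, ← add_assoc, ← sum_add_distrib]
  congr 1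
  refine sum_congr rfl fun i _ => ?_
  rw [mul_sum, mul_sum, ← sum_add_distrib]
  exact sum_congr rfl fun j _ => by ring

end Coagulation

theorem stmt_8_general (T : ℝ)
    (γ : ℕ → ℕ → ℝ) (hγ_symm : ∀ i j, γ i j = γ j i)
    (ξ : ℕ → ℝ → ℝ) (d : ℕ → ℝ → ℝ)
    (hsum_loss : ∀ i : ℕ, 1 ≤ i → ∀ t ∈ Set.Icc (0:ℝ) T,
      Summable (fun j : ℕ => if i ≤ j then γ i j * ξ j t else 0))
    (hξ_deriv : ∀ i : ℕ, 1 ≤ i → ∀ t ∈ Set.Icc (0:ℝ) T, HasDerivAt (ξ i) (d i t) t)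
    (hd : ∀ i : ℕ, 1 ≤ i → ∀ t ∈ Set.Icc (0:ℝ) T,
      d i t = ξ (i - 1) t * ∑ j ∈ Icc 1 (i - 1), (j : ℝ) * γ (i - 1) j * ξ j t
        - ξ i t * ∑ j ∈ Icc 1 i, (j : ℝ) * γ i j * ξ j t
        - ξ i t * ∑' j : ℕ, (if i ≤ j then γ i j * ξ j t else 0))
    (Φ : ℕ → ℝ)
    (q : ℕ) :
    ∀ t ∈ Set.Icc (0:ℝ) T,
      HasDerivAt (fun s => ∑ i ∈ Icc 1 q, Φ i * ξ i s)
        ((∑ i ∈ Icc 1 (q - 1), ∑ j ∈ Icc 1 i,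
            (j : ℝ) * Φ (i + 1) * γ i j * ξ i t * ξ j t)
          - (∑ i ∈ Icc 1 q, ∑ j ∈ Icc 1 i,
              ((j : ℝ) * Φ i + Φ j) * γ i j * ξ i t * ξ j t)
          - ∑' i : ℕ,
              (if q + 1 ≤ i then ∑ j ∈ Icc 1 q, Φ j * γ i j * ξ i t * ξ j t else 0)) t := by
  intro t ht
  have hderiv : HasDerivAt (fun s => ∑ i ∈ Icc 1 q, Φ i * ξ i s)
      (∑ i ∈ Icc 1 q, Φ i * d i t) t :=
    HasDerivAt.fun_sum fun i hi => (hξ_deriv i (mem_Icc.mp hi).1 t ht).const_mul (Φ i)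
  convert hderiv using 1
  have hrate : ∑ i ∈ Icc 1 q, Φ i * d i t
      = (∑ i ∈ Icc 1 q,
            Φ i * (ξ (i - 1) t * ∑ j ∈ Icc 1 (i - 1), (j : ℝ) * γ (i - 1) j * ξ j t))
        - (∑ i ∈ Icc 1 q, Φ i * (ξ i t * ∑ j ∈ Icc 1 i, (j : ℝ) * γ i j * ξ j t))
        - ∑ i ∈ Icc 1 q, Φ i * (ξ i t * ∑' j, if i ≤ j then γ i j * ξ j t else 0) := by
    rw [← sum_sub_distrib, ← sum_sub_distrib]
    refine sum_congr rfl fun i hi => ?_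
    rw [hd i (mem_Icc.mp hi).1 t ht]
    ring
  have hloss := sum_loss_eq (ξ · t) Φ q hγ_symm fun i hi => hsum_loss i (mem_Icc.mp hi).1 t ht
  rw [hrate, sum_gain_eq (ξ · t)]
  linarith

theorem stmt_8 (T : ℝ) (hT : 0 < T)
    (γ : ℕ → ℕ → ℝ) (hγ_nonneg : ∀ i j, 0 ≤ γ i j) (hγ_symm : ∀ i j, γ i j = γ j i)
    (ξ : ℕ → ℝ → ℝ) (d : ℕ → ℝ → ℝ)
    (hξ_nonneg : ∀ i : ℕ, 1 ≤ i → ∀ t ∈ Set.Icc (0:ℝ) T, 0 ≤ ξ i t)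
    (hmoment : ∀ t ∈ Set.Icc (0:ℝ) T, Summable (fun i : ℕ => (i : ℝ) * ξ i t))
    (hsum_loss : ∀ i : ℕ, 1 ≤ i → ∀ t ∈ Set.Icc (0:ℝ) T,
      Summable (fun j : ℕ => if i ≤ j then γ i j * ξ j t else 0))
    (hξ_deriv : ∀ i : ℕ, 1 ≤ i → ∀ t ∈ Set.Icc (0:ℝ) T, HasDerivAt (ξ i) (d i t) t)
    (hd : ∀ i : ℕ, 1 ≤ i → ∀ t ∈ Set.Icc (0:ℝ) T,
      d i t = ξ (i - 1) t * ∑ j ∈ Icc 1 (i - 1), (j : ℝ) * γ (i - 1) j * ξ j t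
        - ξ i t * ∑ j ∈ Icc 1 i, (j : ℝ) * γ i j * ξ j t
        - ξ i t * ∑' j : ℕ, (if i ≤ j then γ i j * ξ j t else 0))
    (Φ : ℕ → ℝ) (C : ℝ) (m : ℕ) (hΦ : ∀ i : ℕ, 1 ≤ i → |Φ i| ≤ C * (i : ℝ) ^ m)
    (q : ℕ) (hq : 1 < q)
    (htail : ∀ t ∈ Set.Icc (0:ℝ) T,
      Summable (fun i : ℕ =>
        if q + 1 ≤ i then ∑ j ∈ Icc 1 q, Φ j * γ i j * ξ i t * ξ j t else 0)) :
    ∀ t ∈ Set.Icc (0:ℝ) T,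
      HasDerivAt (fun s => ∑ i ∈ Icc 1 q, Φ i * ξ i s)
        ((∑ i ∈ Icc 1 (q - 1), ∑ j ∈ Icc 1 i,
            (j : ℝ) * Φ (i + 1) * γ i j * ξ i t * ξ j t)
          - (∑ i ∈ Icc 1 q, ∑ j ∈ Icc 1 i,
              ((j : ℝ) * Φ i + Φ j) * γ i j * ξ i t * ξ j t)
          - ∑' i : ℕ,
              (if q + 1 ≤ i then ∑ j ∈ Icc 1 q, Φ j * γ i j * ξ i t * ξ j t else 0)) t :=
  stmt_8_general T γ hγ_symm ξ d hsum_loss hξ_deriv hd Φ q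
end

section
/- Let ξ = (ξᵢ)_{i≥1} be a nonnegative solution of the discrete Safronov–Dubovskiǐ coagulation equation on [0,∞) with uniformly bounded first moment Σᵢ i ξᵢ(t) ≤ M for all t. Then for every i ≥ 1 the limit ξᵢ^∞ = lim_{t→∞} ξᵢ(t) exists, ξᵢ^∞ ≥ 0, and Σᵢ i ξᵢ^∞ ≤ M. -/
/-!
Let `F_q(t) = ∑_{i=1}^q ξᵢ(t)`. The gain term of the equation for `ξᵢ` is the loss term of the
equation for `ξ_{i-1}`, so summing the equations over `i ≤ q` telescopes to
`F_q' = -Φ_q - ∑_{i ≤ q} ξᵢ ∑_{j ≥ i} γᵢⱼ ξⱼ ≤ 0`, where `Φ_q = ξ_q ∑_{j ≤ q} j γ_{qj} ξⱼ ≥ 0`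
is the flux out of size `q`. Hence each `F_q` is nonincreasing and nonnegative, so it converges,
and so does `ξ_q = F_q - F_{q-1}`. The moment bound passes to the limit on every finite partial sum.
-/

open Finset Filter Topology

theorem Finset.sum_Icc_one_sub_pred {G : Type*} [AddCommGroup G] (f : ℕ → G) (q : ℕ) :
    ∑ i ∈ Icc 1 q, (f (i - 1) - f i) = f 0 - f q := by
  induction q with
  | zero => simp
  | succ q ih =>
    rw [Finset.sum_Icc_succ_top (by omega), ih, Nat.add_sub_cancel]
    abel

theorem antitoneOn_of_hasDerivAt_nonpos {D : Set ℝ} (hD : Convex ℝ D) {f f' : ℝ → ℝ}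
    (hf : ∀ x ∈ D, HasDerivAt f (f' x) x) (hf' : ∀ x ∈ D, f' x ≤ 0) : AntitoneOn f D :=
  antitoneOn_of_hasDerivWithinAt_nonpos hD
    (fun x hx => (hf x hx).continuousAt.continuousWithinAt)
    (fun x hx => (hf x (interior_subset hx)).hasDerivWithinAt)
    (fun x hx => hf' x (interior_subset hx))

theorem AntitoneOn.exists_tendsto_atTop_of_Ici {α β : Type*} [LinearOrder α]
    [ConditionallyCompleteLinearOrder β] [TopologicalSpace β] [OrderTopology β]
    {f : α → β} {a : α} {c : β} (hf : AntitoneOn f (Set.Ici a)) (hc : ∀ t ∈ Set.Ici a, c ≤ f t) :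
    ∃ l, Tendsto f atTop (𝓝 l) := by
  have hanti : Antitone fun t => f (max t a) := fun s t hst =>
    hf (le_max_right s a) (le_max_right t a) (max_le_max hst le_rfl)
  have hbdd : BddBelow (Set.range fun t => f (max t a)) := by
    refine ⟨c, ?_⟩
    rintro - ⟨t, rfl⟩
    exact hc _ (le_max_right t a)
  refine ⟨_, (tendsto_atTop_ciInf hanti hbdd).congr' ?_⟩
  filter_upwards [eventually_ge_atTop a] with t ht
  rw [max_eq_left ht]

theorem tendsto_of_tendsto_sum_Icc {α β : Type*} [AddCommGroup β] [TopologicalSpace β]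
    [IsTopologicalAddGroup β] {l : Filter α} {x : ℕ → α → β} {L : ℕ → β}
    (h : ∀ q, Tendsto (fun t => ∑ i ∈ Icc 1 q, x i t) l (𝓝 (L q))) {i : ℕ} (hi : 1 ≤ i) :
    Tendsto (x i) l (𝓝 (L i - L (i - 1))) := by
  obtain ⟨m, rfl⟩ : ∃ m, i = m + 1 := ⟨i - 1, by omega⟩
  refine ((h (m + 1)).sub (h m)).congr fun t => ?_
  rw [Finset.sum_Icc_succ_top (by omega)]
  simp

theorem summable_and_tsum_le_of_tendsto {α : Type*} {l : Filter α} [l.NeBot]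
    {u : α → ℕ → ℝ} {v : ℕ → ℝ} {M : ℝ} (hlim : ∀ i, Tendsto (fun t => u t i) l (𝓝 (v i)))
    (hu : ∀ᶠ t in l, 0 ≤ u t ∧ Summable (u t) ∧ ∑' i, u t i ≤ M) :
    Summable v ∧ ∑' i, v i ≤ M := by
  have hv : ∀ i, 0 ≤ v i := fun i => ge_of_tendsto (hlim i) (hu.mono fun t h => h.1 i)
  have hpartial : ∀ n, ∑ i ∈ range n, v i ≤ M := fun n =>
    le_of_tendsto (tendsto_finsetSum _ fun i _ => hlim i) <|
      hu.mono fun t ⟨h0, hs, hM⟩ => (hs.sum_le_tsum _ fun i _ => h0 i).trans hM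
  exact ⟨summable_of_sum_range_le hv hpartial, Real.tsum_le_of_sum_range_le hv hpartial⟩

section Coagulation

variable (γ : ℕ → ℕ → ℝ) (x : ℕ → ℝ)

def coagFlux (i : ℕ) : ℝ :=
  x i * ∑ j ∈ Icc 1 i, (j : ℝ) * γ i j * x j

variable {γ x}

theorem coagFlux_zero : coagFlux γ x 0 = 0 := by
  simp [coagFlux]

theorem coagFlux_nonneg (hγ : ∀ i j, 0 ≤ γ i j) (hx : ∀ i, 1 ≤ i → 0 ≤ x i) (i : ℕ) :
    0 ≤ coagFlux γ x i := by
  rcases Nat.eq_zero_or_pos i with rfl | hi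
  · rw [coagFlux_zero]
  · refine mul_nonneg (hx i hi) (sum_nonneg fun j hj => ?_)
    exact mul_nonneg (mul_nonneg j.cast_nonneg (hγ i j)) (hx j (mem_Icc.1 hj).1)

theorem sum_Icc_coagRate_nonpos (hγ : ∀ i j, 0 ≤ γ i j) (hx : ∀ i, 1 ≤ i → 0 ≤ x i)
    {r : ℕ → ℝ} (hr : ∀ i, 1 ≤ i → r i = coagFlux γ x (i - 1) - coagFlux γ x i
      - x i * ∑' j : ℕ, (if i ≤ j then γ i j * x j else 0)) (q : ℕ) :
    ∑ i ∈ Icc 1 q, r i ≤ 0 := by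
  have hloss : 0 ≤ ∑ i ∈ Icc 1 q, x i * ∑' j : ℕ, (if i ≤ j then γ i j * x j else 0) := by
    refine sum_nonneg fun i hi => mul_nonneg (hx i (mem_Icc.1 hi).1) (tsum_nonneg fun j => ?_)
    split_ifs with hij
    · exact mul_nonneg (hγ i j) (hx j ((mem_Icc.1 hi).1.trans hij))
    · exact le_rfl
  calc ∑ i ∈ Icc 1 q, r i
      = ∑ i ∈ Icc 1 q, (coagFlux γ x (i - 1) - coagFlux γ x i)
        - ∑ i ∈ Icc 1 q, x i * ∑' j : ℕ, (if i ≤ j then γ i j * x j else 0) := by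
        rw [← sum_sub_distrib]
        exact sum_congr rfl fun i hi => hr i (mem_Icc.1 hi).1
    _ = -coagFlux γ x q
        - ∑ i ∈ Icc 1 q, x i * ∑' j : ℕ, (if i ≤ j then γ i j * x j else 0) := by
        rw [sum_Icc_one_sub_pred, coagFlux_zero, zero_sub]
    _ ≤ 0 := by linarith [coagFlux_nonneg hγ hx q]

end Coagulation

theorem stmt_10_general (M : ℝ)
    (γ : ℕ → ℕ → ℝ) (hγ_nonneg : ∀ i j, 0 ≤ γ i j)
    (ξ : ℕ → ℝ → ℝ) (d : ℕ → ℝ → ℝ)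
    (hξ_nonneg : ∀ i : ℕ, 1 ≤ i → ∀ t ∈ Set.Ici (0:ℝ), 0 ≤ ξ i t)
    (hmoment : ∀ t ∈ Set.Ici (0:ℝ), Summable (fun i : ℕ => (i : ℝ) * ξ i t))
    (hmoment_bdd : ∀ t ∈ Set.Ici (0:ℝ),
      ∑' i : ℕ, (if 1 ≤ i then (i : ℝ) * ξ i t else 0) ≤ M)
    (hξ_deriv : ∀ i : ℕ, 1 ≤ i → ∀ t ∈ Set.Ici (0:ℝ), HasDerivAt (ξ i) (d i t) t)
    (hd : ∀ i : ℕ, 1 ≤ i → ∀ t ∈ Set.Ici (0:ℝ),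
      d i t = ξ (i - 1) t * ∑ j ∈ Icc 1 (i - 1), (j : ℝ) * γ (i - 1) j * ξ j t
        - ξ i t * ∑ j ∈ Icc 1 i, (j : ℝ) * γ i j * ξ j t
        - ξ i t * ∑' j : ℕ, (if i ≤ j then γ i j * ξ j t else 0)) :
    ∃ xiInf : ℕ → ℝ,
      (∀ i : ℕ, 1 ≤ i → Tendsto (fun t => ξ i t) atTop (nhds (xiInf i))) ∧
      (∀ i : ℕ, 1 ≤ i → 0 ≤ xiInf i) ∧
      Summable (fun i : ℕ => if 1 ≤ i then (i : ℝ) * xiInf i else 0) ∧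
      ∑' i : ℕ, (if 1 ≤ i then (i : ℝ) * xiInf i else 0) ≤ M := by
  have hF : ∀ q, ∃ l, Tendsto (fun t => ∑ i ∈ Icc 1 q, ξ i t) atTop (𝓝 l) := fun q =>
    AntitoneOn.exists_tendsto_atTop_of_Ici
      (antitoneOn_of_hasDerivAt_nonpos (convex_Ici 0)
        (fun t ht => HasDerivAt.fun_sum fun i hi => hξ_deriv i (mem_Icc.1 hi).1 t ht)
        (fun t ht => sum_Icc_coagRate_nonpos hγ_nonneg (fun i hi => hξ_nonneg i hi t ht)
          (fun i hi => hd i hi t ht) q))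
      (fun t ht => sum_nonneg fun i hi => hξ_nonneg i (mem_Icc.1 hi).1 t ht)
  choose L hL using hF
  have hlim (i : ℕ) (hi : 1 ≤ i) : Tendsto (ξ i) atTop (𝓝 (L i - L (i - 1))) :=
    tendsto_of_tendsto_sum_Icc hL hi
  have hlim_nonneg (i : ℕ) (hi : 1 ≤ i) : 0 ≤ L i - L (i - 1) :=
    ge_of_tendsto (hlim i hi) <| (eventually_ge_atTop 0).mono fun t ht => hξ_nonneg i hi t ht
  obtain ⟨hsum, hle⟩ := summable_and_tsum_le_of_tendsto
    (u := fun t i => if 1 ≤ i then (i : ℝ) * ξ i t else 0)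
    (v := fun i => if 1 ≤ i then (i : ℝ) * (L i - L (i - 1)) else 0)
    (fun i => by
      split_ifs with hi
      · exact (hlim i hi).const_mul _
      · exact tendsto_const_nhds)
    (by
      filter_upwards [eventually_ge_atTop 0] with t ht
      refine ⟨fun i => ?_, (hmoment t ht).congr fun i => ?_, hmoment_bdd t ht⟩
      · dsimp only
        split_ifs with hi
        · exact mul_nonneg i.cast_nonneg (hξ_nonneg i hi t ht)
        · exact le_rfl
      · split_ifs with hi
        · rfl
        · simp [show i = 0 by omega])
  exact ⟨_, hlim, hlim_nonneg, hsum, hle⟩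

theorem stmt_10 (M : ℝ)
    (γ : ℕ → ℕ → ℝ) (hγ_nonneg : ∀ i j, 0 ≤ γ i j) (hγ_symm : ∀ i j, γ i j = γ j i)
    (ξ : ℕ → ℝ → ℝ) (d : ℕ → ℝ → ℝ)
    (hξ_nonneg : ∀ i : ℕ, 1 ≤ i → ∀ t ∈ Set.Ici (0:ℝ), 0 ≤ ξ i t)
    (hmoment : ∀ t ∈ Set.Ici (0:ℝ), Summable (fun i : ℕ => (i : ℝ) * ξ i t))
    (hmoment_bdd : ∀ t ∈ Set.Ici (0:ℝ),
      ∑' i : ℕ, (if 1 ≤ i then (i : ℝ) * ξ i t else 0) ≤ M)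
    (hsum_loss : ∀ i : ℕ, 1 ≤ i → ∀ t ∈ Set.Ici (0:ℝ),
      Summable (fun j : ℕ => if i ≤ j then γ i j * ξ j t else 0))
    (hξ_deriv : ∀ i : ℕ, 1 ≤ i → ∀ t ∈ Set.Ici (0:ℝ), HasDerivAt (ξ i) (d i t) t)
    (hd : ∀ i : ℕ, 1 ≤ i → ∀ t ∈ Set.Ici (0:ℝ),
      d i t = ξ (i - 1) t * ∑ j ∈ Icc 1 (i - 1), (j : ℝ) * γ (i - 1) j * ξ j t
        - ξ i t * ∑ j ∈ Icc 1 i, (j : ℝ) * γ i j * ξ j t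
        - ξ i t * ∑' j : ℕ, (if i ≤ j then γ i j * ξ j t else 0)) :
    ∃ xiInf : ℕ → ℝ,
      (∀ i : ℕ, 1 ≤ i → Tendsto (fun t => ξ i t) atTop (nhds (xiInf i))) ∧
      (∀ i : ℕ, 1 ≤ i → 0 ≤ xiInf i) ∧
      Summable (fun i : ℕ => if 1 ≤ i then (i : ℝ) * xiInf i else 0) ∧
      ∑' i : ℕ, (if 1 ≤ i then (i : ℝ) * xiInf i else 0) ≤ M :=
  stmt_10_general M γ hγ_nonneg ξ d hξ_nonneg hmoment hmoment_bdd hξ_deriv hd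
end

section
/- Let u : [0,T] → [0,∞) be continuous with u(t) ≤ u(0) + C ∫₀^t u(s) ds for all t ∈ [0,T], where C ≥ 0. If u(0) = 0 then u ≡ 0 on [0,T]; in general u(t) ≤ u(0) e^{Ct}. Applied with u(t) = Σᵢ i |ξᵢ(t) − ηᵢ(t)| for two solutions ξ, η of the discrete Safronov–Dubovskiǐ equation with the same initial data and C = 4A(Δ_λ(T) + Δ₁), this yields uniqueness of solutions. -/
/-!
Set `v t = ∫₀ᵗ u`. By the fundamental theorem of calculus `v` has right derivative `u ≤ c + C v`
and `v 0 = 0`, so the differential Gronwall inequality bounds `v` by the solution of `w' = c + C w`,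
`w 0 = 0`. Feeding this back into the hypothesis gives `u ≤ c + C w = c e^{Ct}`.
-/

open Set Real

theorem continuousOn_primitive_of_continuousOn {u : ℝ → ℝ} {a b : ℝ}
    (hu : ContinuousOn u (Icc a b)) : ContinuousOn (fun t => ∫ s in a..t, u s) (Icc a b) := by
  rcases le_or_gt a b with hab | hba
  · rw [← uIcc_of_le hab] at hu ⊢
    exact intervalIntegral.continuousOn_primitive_interval' hu.intervalIntegrable left_mem_uIcc
  · simp [Icc_eq_empty_of_lt hba]

theorem hasDerivWithinAt_primitive_Ici_of_continuousOn {u : ℝ → ℝ} {a b x : ℝ}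
    (hu : ContinuousOn u (Icc a b)) (hx : x ∈ Ico a b) :
    HasDerivWithinAt (fun t => ∫ s in a..t, u s) (u x) (Ici x) x := by
  have hnhds : Icc a b ∈ nhdsWithin x (Ioi x) := Icc_mem_nhdsGT_of_mem hx
  have hint : IntervalIntegrable u MeasureTheory.volume a x :=
    (hu.mono (Icc_subset_Icc_right hx.2.le)).intervalIntegrable_of_Icc hx.1
  exact intervalIntegral.integral_hasDerivWithinAt_right hint
    ⟨Icc a b, hnhds, hu.aestronglyMeasurable measurableSet_Icc⟩
    ((hu x (Ico_subset_Icc_self hx)).mono_of_mem_nhdsWithin hnhds)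

theorem add_mul_gronwallBound_zero (K ε x : ℝ) :
    ε + K * gronwallBound 0 K ε x = ε * exp (K * x) := by
  rcases eq_or_ne K 0 with rfl | hK
  · simp [gronwallBound_K0]
  · rw [gronwallBound_of_K_ne_0 hK]
    field_simp
    ring

theorem le_mul_exp_of_le_add_mul_integral {u : ℝ → ℝ} {a b c C : ℝ} (hC : 0 ≤ C)
    (hu : ContinuousOn u (Icc a b)) (h : ∀ t ∈ Icc a b, u t ≤ c + C * ∫ s in a..t, u s) :
    ∀ t ∈ Icc a b, u t ≤ c * exp (C * (t - a)) := by
  intro t ht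
  have hprimitive : ∫ s in a..t, u s ≤ gronwallBound 0 C c (t - a) :=
    le_gronwallBound_of_liminf_deriv_right_le (continuousOn_primitive_of_continuousOn hu)
      (fun x hx _ hr =>
        (hasDerivWithinAt_primitive_Ici_of_continuousOn hu hx).liminf_right_slope_le hr)
      (by simp) (fun x hx => by linarith [h x (Ico_subset_Icc_self hx)]) t ht
  calc u t ≤ c + C * ∫ s in a..t, u s := h t ht
    _ ≤ c + C * gronwallBound 0 C c (t - a) := by gcongr
    _ = c * exp (C * (t - a)) := add_mul_gronwallBound_zero C c (t - a)

theorem stmt_13_general (T C : ℝ) (hC : 0 ≤ C)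
    (u : ℝ → ℝ)
    (hu_cont : ContinuousOn u (Set.Icc 0 T))
    (hu_nonneg : ∀ t ∈ Set.Icc (0:ℝ) T, 0 ≤ u t)
    (hu_ineq : ∀ t ∈ Set.Icc (0:ℝ) T, u t ≤ u 0 + C * ∫ s in (0:ℝ)..t, u s) :
    (u 0 = 0 → ∀ t ∈ Set.Icc (0:ℝ) T, u t = 0) ∧
    (∀ t ∈ Set.Icc (0:ℝ) T, u t ≤ u 0 * Real.exp (C * t)) := by
  have hexp : ∀ t ∈ Icc (0:ℝ) T, u t ≤ u 0 * exp (C * t) := by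
    simpa only [sub_zero] using le_mul_exp_of_le_add_mul_integral hC hu_cont hu_ineq
  refine ⟨fun h0 t ht => le_antisymm ?_ (hu_nonneg t ht), hexp⟩
  simpa [h0] using hexp t ht

theorem stmt_13 (T C : ℝ) (hT : 0 < T) (hC : 0 ≤ C)
    (u : ℝ → ℝ)
    (hu_cont : ContinuousOn u (Set.Icc 0 T))
    (hu_nonneg : ∀ t ∈ Set.Icc (0:ℝ) T, 0 ≤ u t)
    (hu_ineq : ∀ t ∈ Set.Icc (0:ℝ) T, u t ≤ u 0 + C * ∫ s in (0:ℝ)..t, u s) :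
    (u 0 = 0 → ∀ t ∈ Set.Icc (0:ℝ) T, u t = 0) ∧
    (∀ t ∈ Set.Icc (0:ℝ) T, u t ≤ u 0 * Real.exp (C * t)) :=
  stmt_13_general T C hC u hu_cont hu_nonneg hu_ineq
end

section
/- Let ξ be a nonnegative solution of the discrete Safronov–Dubovskiǐ coagulation equation with γ_{1,1} > 0 and all moments involved finite. Then ξ₁(t+τ) − ξ₁(t) ≤ −γ_{1,1} ∫_t^{t+τ} ξ₁(s)² ds for all t ≥ 0, τ > 0; consequently, since ξ₁(t) converges as t → ∞, its limit ξ₁^∞ satisfies ξ₁^∞ = 0. -/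
/-!
Since all coefficients and concentrations are nonnegative, the coagulation equation for monomers
gives `ξ₁' ≤ -γ₁₁ ξ₁²`, and integrating this yields the decay inequality. If `ξ₁ → L ≠ 0`, then
`ξ₁²` stays above `L² / 2` for large times, so the inequality forces `ξ₁(t + 1) - ξ₁(t)` below the
negative constant `-γ₁₁ L² / 2`, while it must tend to `L - L = 0`.
-/

open Filter Set intervalIntegral MeasureTheory Topology

lemma sub_le_neg_mul_integral_sq_of_deriv_le {f f' : ℝ → ℝ} {a b c : ℝ} (hab : a ≤ b)
    (hf : ∀ x ∈ Icc a b, HasDerivAt f (f' x) x) (hf' : ∀ x ∈ Icc a b, f' x ≤ -c * f x ^ 2) :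
    f b - f a ≤ -c * ∫ s in a..b, f s ^ 2 := by
  have hcont : ContinuousOn f (Icc a b) := fun x hx => (hf x hx).continuousAt.continuousWithinAt
  rw [← intervalIntegral.integral_const_mul]
  exact sub_le_integral_of_hasDeriv_right_of_le hab hcont
    (fun x hx => (hf x (Ioo_subset_Icc_self hx)).hasDerivWithinAt)
    ((continuousOn_const.mul (hcont.pow 2)).integrableOn_Icc)
    (fun x hx => hf' x (Ioo_subset_Icc_self hx))

lemma eq_zero_of_tendsto_of_sub_le_neg_mul_integral_sq {f : ℝ → ℝ} {c L : ℝ} (hc : 0 < c)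
    (hf : Tendsto f atTop (𝓝 L))
    (hint : ∀ᶠ t in atTop, IntervalIntegrable (fun s => f s ^ 2) volume t (t + 1))
    (hdecay : ∀ᶠ t in atTop, f (t + 1) - f t ≤ -c * ∫ s in t..(t + 1), f s ^ 2) :
    L = 0 := by
  by_contra hL
  have hL2 : 0 < L ^ 2 := by positivity
  have hsq_large : ∀ᶠ s in atTop, L ^ 2 / 2 ≤ f s ^ 2 :=
    (hf.pow 2).eventually (eventually_ge_nhds (by linarith))
  obtain ⟨N, hN⟩ := eventually_atTop.1 hsq_large
  have hincr : Tendsto (fun t => f (t + 1) - f t) atTop (𝓝 0) := by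
    simpa using (hf.comp (tendsto_atTop_add_const_right _ 1 tendsto_id)).sub hf
  have hincr_large : ∀ᶠ t in atTop, -c * (L ^ 2 / 2) < f (t + 1) - f t :=
    hincr.eventually (eventually_gt_nhds (by nlinarith))
  obtain ⟨t, ht_int, ht_decay, ht_incr, htN⟩ :=
    (hint.and (hdecay.and (hincr_large.and (eventually_ge_atTop N)))).exists
  have hintegral : L ^ 2 / 2 ≤ ∫ s in t..(t + 1), f s ^ 2 := by
    calc L ^ 2 / 2 = ∫ _ in t..(t + 1), L ^ 2 / 2 := by simp
      _ ≤ ∫ s in t..(t + 1), f s ^ 2 :=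
        integral_mono_on (by linarith) intervalIntegrable_const ht_int
          fun s hs => hN s (htN.trans hs.1)
  nlinarith

theorem stmt_19_general
    (γ : ℕ → ℕ → ℝ) (hγ_nonneg : ∀ i j, 0 ≤ γ i j) (hγ11 : 0 < γ 1 1)
    (ξ : ℕ → ℝ → ℝ) (d : ℝ → ℝ)
    (hξ_nonneg : ∀ i : ℕ, 1 ≤ i → ∀ t ∈ Set.Ici (0:ℝ), 0 ≤ ξ i t)
    (hderiv : ∀ t ∈ Set.Ici (0:ℝ), HasDerivAt (ξ 1) (d t) t)
    (hd : ∀ t ∈ Set.Ici (0:ℝ),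
      d t = -(γ 1 1 * (ξ 1 t) ^ 2)
        - ξ 1 t * ∑' j : ℕ, (if 1 ≤ j then γ 1 j * ξ j t else 0)) :
    (∀ t ∈ Set.Ici (0:ℝ), ∀ τ > (0:ℝ),
      ξ 1 (t + τ) - ξ 1 t ≤ -(γ 1 1) * ∫ s in t..(t + τ), (ξ 1 s) ^ 2) ∧
    ∀ L : ℝ, Tendsto (ξ 1) atTop (nhds L) → L = 0 := by
  have hd_le : ∀ t ∈ Ici (0:ℝ), d t ≤ -γ 1 1 * ξ 1 t ^ 2 := fun t ht => by
    have hloss : 0 ≤ ∑' j : ℕ, (if 1 ≤ j then γ 1 j * ξ j t else 0) :=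
      tsum_nonneg fun j => by
        split_ifs with hj
        exacts [mul_nonneg (hγ_nonneg 1 j) (hξ_nonneg j hj t ht), le_rfl]
    rw [hd t ht]
    nlinarith [mul_nonneg (hξ_nonneg 1 le_rfl t ht) hloss]
  have hdecay : ∀ t ∈ Ici (0:ℝ), ∀ τ > (0:ℝ),
      ξ 1 (t + τ) - ξ 1 t ≤ -(γ 1 1) * ∫ s in t..(t + τ), (ξ 1 s) ^ 2 :=
    fun t (ht : 0 ≤ t) τ hτ => sub_le_neg_mul_integral_sq_of_deriv_le (by linarith)
      (fun x hx => hderiv x (ht.trans hx.1)) (fun x hx => hd_le x (ht.trans hx.1))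
  refine ⟨hdecay, fun L hL => eq_zero_of_tendsto_of_sub_le_neg_mul_integral_sq hγ11 hL ?_ ?_⟩
  · filter_upwards [eventually_ge_atTop 0] with t ht
    refine ContinuousOn.intervalIntegrable fun x hx => ?_
    rw [uIcc_of_le (by linarith)] at hx
    exact ((hderiv x (ht.trans hx.1)).continuousAt.pow 2).continuousWithinAt
  · filter_upwards [eventually_ge_atTop 0] with t ht using hdecay t ht 1 one_pos

theorem stmt_19
    (γ : ℕ → ℕ → ℝ) (hγ_nonneg : ∀ i j, 0 ≤ γ i j) (hγ11 : 0 < γ 1 1)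
    (ξ : ℕ → ℝ → ℝ) (d : ℝ → ℝ)
    (hξ_nonneg : ∀ i : ℕ, 1 ≤ i → ∀ t ∈ Set.Ici (0:ℝ), 0 ≤ ξ i t)
    (hsum : ∀ t ∈ Set.Ici (0:ℝ),
      Summable (fun j : ℕ => if 1 ≤ j then γ 1 j * ξ j t else 0))
    (hderiv : ∀ t ∈ Set.Ici (0:ℝ), HasDerivAt (ξ 1) (d t) t)
    (hd : ∀ t ∈ Set.Ici (0:ℝ),
      d t = -(γ 1 1 * (ξ 1 t) ^ 2)
        - ξ 1 t * ∑' j : ℕ, (if 1 ≤ j then γ 1 j * ξ j t else 0)) :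
    (∀ t ∈ Set.Ici (0:ℝ), ∀ τ > (0:ℝ),
      ξ 1 (t + τ) - ξ 1 t ≤ -(γ 1 1) * ∫ s in t..(t + τ), (ξ 1 s) ^ 2) ∧
    ∀ L : ℝ, Tendsto (ξ 1) atTop (nhds L) → L = 0 :=
  stmt_19_general γ hγ_nonneg hγ11 ξ d hξ_nonneg hderiv hd
end
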